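/- The integral over [0,1] of the function y ↦ −2 y log(y) / (π √(y(1−y))) equals log(4) − 1, where log denotes the natural logarithm. (This is the mean entropy of the arcsine eigenvalue distribution arising for the unimodular ensemble at N = 2.) -/

import Mathlib

/-!
Substituting `y = sin² θ` turns the arcsine density `dy / (π √(y(1-y)))` into `(2/π) dθ` on
`[0, π/2]`, so the integral becomes `-(8/π) ∫₀^{π/2} sin² θ log (sin θ) dθ`.
Writing `sin² θ = (1 - cos 2θ)/2`, this reduces to the classical
`∫₀^{π/2} log (sin θ) dθ = -(π/2) log 2` and to `∫₀^{π/2} cos 2θ log (sin θ) dθ = -π/4`,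
which has an elementary antiderivative.
-/

open Real Set intervalIntegral

/-- No integrability of `g` is required: both sides are integrable or not together. -/
lemma integral_comp_sin_sq_mul_deriv (g : ℝ → ℝ) :
    ∫ x in 0..π / 2, g (sin x ^ 2) * (2 * sin x * cos x) = ∫ y in (0 : ℝ)..1, g y := by
  have h := integral_comp_mul_deriv_of_deriv_nonneg (a := 0) (b := π / 2) (g := g)
    (f := fun x ↦ sin x ^ 2) (f' := fun x ↦ 2 * sin x * cos x)
    (continuous_sin.pow 2).continuousOn
    (fun x _ ↦ by simpa [mul_comm] using (hasDerivAt_sin x).fun_pow 2)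
    (fun x hx ↦ by
      rw [min_eq_left pi_div_two_pos.le, max_eq_right pi_div_two_pos.le] at hx
      have hsin := sin_pos_of_pos_of_lt_pi hx.1 (by linarith [pi_pos, hx.2])
      have hcos := cos_pos_of_mem_Ioo ⟨by linarith [pi_pos, hx.1], hx.2⟩
      positivity)
  simpa using h

lemma integral_cos_two_mul_mul_log_sin :
    ∫ x in 0..π / 2, cos (2 * x) * log (sin x) = -(π / 4) := by
  -- `(cos x · sin x log (sin x))' = cos 2x · log (sin x) + cos² x`
  -- and `cos² x = (x/2 + sin 2x/4)'`.
  have hderiv : ∀ x ∈ Ioo 0 (π / 2), HasDerivAt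
      (fun x ↦ cos x * (sin x * log (sin x)) - x / 2 - sin (2 * x) / 4)
      (cos (2 * x) * log (sin x)) x := by
    intro x hx
    have hsin : sin x ≠ 0 := (sin_pos_of_pos_of_lt_pi hx.1 (by linarith [pi_pos, hx.2])).ne'
    have h := (((hasDerivAt_cos x).mul ((hasDerivAt_mul_log hsin).comp x (hasDerivAt_sin x))).sub
      ((hasDerivAt_id x).div_const 2)).sub
      (((hasDerivAt_sin (2 * x)).comp x ((hasDerivAt_id x).const_mul 2)).div_const 4)
    refine h.congr_deriv ?_
    simp only [Function.comp_apply, cos_two_mul']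
    linear_combination (1 / 2 : ℝ) * sin_sq_add_cos_sq x
  have hcont : Continuous fun x ↦ cos x * (sin x * log (sin x)) - x / 2 - sin (2 * x) / 4 := by
    have := continuous_mul_log.comp continuous_sin
    fun_prop
  rw [integral_eq_sub_of_hasDerivAt_of_le pi_div_two_pos.le hcont.continuousOn hderiv
    (intervalIntegrable_log_sin.continuousOn_mul (by fun_prop))]
  simp only [cos_pi_div_two, cos_zero, mul_zero, sin_zero, log_zero, sin_pi,
    show 2 * (π / 2) = π by ring]
  ring

lemma integral_sin_sq_mul_log_sin :
    ∫ x in 0..π / 2, sin x ^ 2 * log (sin x) = π / 8 - π / 4 * log 2 := by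
  have hlog : IntervalIntegrable (fun x ↦ log (sin x)) MeasureTheory.volume 0 (π / 2) :=
    intervalIntegrable_log_sin
  calc ∫ x in 0..π / 2, sin x ^ 2 * log (sin x)
      = ∫ x in 0..π / 2, (1 / 2 * log (sin x) - 1 / 2 * (cos (2 * x) * log (sin x))) := by
        congr 1 with x
        rw [sin_sq_eq_half_sub]
        ring
    _ = π / 8 - π / 4 * log 2 := by
        rw [integral_sub (hlog.const_mul _) ((hlog.continuousOn_mul (by fun_prop)).const_mul _),
          integral_const_mul, integral_const_mul, integral_log_sin_zero_pi_div_two,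
          integral_cos_two_mul_mul_log_sin]
        ring

lemma arcsine_integrand_sin_sq {x : ℝ} (hs : 0 ≤ sin x) (hc : 0 ≤ cos x) :
    -2 * sin x ^ 2 * log (sin x ^ 2) / (π * √(sin x ^ 2 * (1 - sin x ^ 2))) * (2 * sin x * cos x)
      = -8 / π * (sin x ^ 2 * log (sin x)) := by
  rw [← cos_sq', ← mul_pow, sqrt_sq (mul_nonneg hs hc), log_pow]
  -- At `sin x = 0` or `cos x = 0` both sides vanish, via `x / 0 = 0` and `log 1 = 0`.
  rcases hs.eq_or_lt with hs0 | hs0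
  · simp [← hs0]
  rcases hc.eq_or_lt with hc0 | hc0
  · have : sin x = 1 := by nlinarith [sin_sq_add_cos_sq x]
    simp [← hc0, this]
  field_simp
  ring

theorem arcsine_mean_entropy :
    ∫ y in (0:ℝ)..1, (-2 * y * Real.log y) / (Real.pi * Real.sqrt (y * (1 - y))) =
      Real.log 4 - 1 := by
  rw [← integral_comp_sin_sq_mul_deriv]
  calc _ = ∫ x in 0..π / 2, -8 / π * (sin x ^ 2 * log (sin x)) := by
        refine integral_congr fun x hx ↦ arcsine_integrand_sin_sq ?_ ?_
        all_goals rw [uIcc_of_le pi_div_two_pos.le] at hx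
        · exact sin_nonneg_of_nonneg_of_le_pi hx.1 (by linarith [pi_pos, hx.2])
        · exact cos_nonneg_of_mem_Icc ⟨by linarith [pi_pos, hx.1], hx.2⟩
    _ = log 4 - 1 := by
        rw [integral_const_mul, integral_sin_sq_mul_log_sin,
          show (4 : ℝ) = 2 ^ 2 by norm_num, log_pow]
        field_simp
        ring
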